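/- arXiv:2206.05740 — 3 statements merged into one kernel-verified Lean document; each statement's English description precedes it below -/
import Mathlib

section
/- For all primes p ≥ 41 and q > 5 with p > 2·2^{1/4}·q, the quantity (2/√3)·√(UB1·UB2)/LB is less than 3, where UB1 = (1/2)log p + (1/24)log(2^{11} p^4), UB2 = (1/2)log p + (1/6)log(2^{11} p^4), and LB = (1/8)log(p^4/2) − (1/3)log 2. -/
/-- For all primes `p ≥ 41` and `q > 5` with `p > 2·2^{1/4}·q`, the quantity
`(2/√3)·√(UB1·UB2)/LB` is less than 3, where `UB1 = (1/2)log p + (1/24)log(2¹¹p⁴)`,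
`UB2 = (1/2)log p + (1/6)log(2¹¹p⁴)` and `LB = (1/8)log(p⁴/2) - (1/3)log 2`. -/
theorem stmt_10 (p q : ℕ) (hp : p.Prime) (hq : q.Prime) (hp41 : 41 ≤ p) (hq5 : 5 < q)
    (h : (p : ℝ) > 2 * (2 : ℝ) ^ ((1 : ℝ) / 4) * q) :
    2 / Real.sqrt 3 *
      Real.sqrt ((1 / 2 * Real.log p + 1 / 24 * Real.log (2 ^ 11 * (p : ℝ) ^ 4)) *
        (1 / 2 * Real.log p + 1 / 6 * Real.log (2 ^ 11 * (p : ℝ) ^ 4))) /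
      (1 / 8 * Real.log ((p : ℝ) ^ 4 / 2) - 1 / 3 * Real.log 2) < 3 := by
  have hp0 : (0:ℝ) < p := by
    have : 0 < p := by omega
    exact_mod_cast this
  set L := Real.log p with hLdef
  set c := Real.log 2 with hcdef
  have hc1 : c < 0.6931471808 := Real.log_two_lt_d9
  have hc2 : (0.6931471803 : ℝ) < c := Real.log_two_gt_d9
  have hL : (3.7:ℝ) < L := by
    have h41 : (41:ℝ) ≤ p := by exact_mod_cast hp41
    have hlog41 : (3.7:ℝ) < Real.log 41 := by
      rw [Real.lt_log_iff_exp_lt (by norm_num)]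
      have h1 : Real.exp 3.7 ^ (10:ℕ) < 41 ^ (10:ℕ) := by
        have e1 : Real.exp 3.7 ^ (10:ℕ) = Real.exp 1 ^ (37:ℕ) := by
          rw [← Real.exp_nat_mul, ← Real.exp_nat_mul]; norm_num
        rw [e1]
        calc Real.exp 1 ^ (37:ℕ) < 2.7182818286 ^ (37:ℕ) :=
              pow_lt_pow_left₀ Real.exp_one_lt_d9 (le_of_lt (Real.exp_pos 1)) (by norm_num)
          _ < 41 ^ (10:ℕ) := by norm_num
      exact lt_of_pow_lt_pow_left₀ 10 (by norm_num) h1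
    have := Real.log_le_log (by norm_num : (0:ℝ) < 41) h41
    linarith
  have hlog1 : Real.log (2 ^ 11 * (p:ℝ) ^ 4) = 11 * c + 4 * L := by
    rw [Real.log_mul (by positivity) (by positivity), Real.log_pow, Real.log_pow]
    push_cast; ring
  have hlog2 : Real.log ((p:ℝ) ^ 4 / 2) = 4 * L - c := by
    rw [Real.log_div (by positivity) (by norm_num), Real.log_pow]
    push_cast; ring
  rw [hlog1, hlog2]
  set A := 1 / 2 * L + 1 / 24 * (11 * c + 4 * L) with hAdef
  set B := 1 / 2 * L + 1 / 6 * (11 * c + 4 * L) with hBdef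
  have hA : 0 ≤ A := by rw [hAdef]; nlinarith
  have hB : 0 ≤ B := by rw [hBdef]; nlinarith
  have hLB : 0 < 1 / 8 * (4 * L - c) - 1 / 3 * c := by nlinarith
  rw [div_lt_iff₀ hLB]
  have hsq : (2 / Real.sqrt 3 * Real.sqrt (A * B)) ^ 2 = 4 / 3 * (A * B) := by
    rw [mul_pow, div_pow, Real.sq_sqrt (mul_nonneg hA hB),
      Real.sq_sqrt (by norm_num : (0:ℝ) ≤ 3)]
    ring
  have key : 4 / 3 * (A * B) < (3 * (1 / 8 * (4 * L - c) - 1 / 3 * c)) ^ 2 := by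
    rw [hAdef, hBdef]
    nlinarith [sq_nonneg (L - 3.7), mul_nonneg (by linarith : (0:ℝ) ≤ L - 3.7) (by linarith : (0:ℝ) ≤ c), sq_nonneg c, sq_nonneg (c - 0.6931471808)]
  have h2 : (2 / Real.sqrt 3 * Real.sqrt (A * B)) ^ 2
      < (3 * (1 / 8 * (4 * L - c) - 1 / 3 * c)) ^ 2 := by rw [hsq]; exact key
  exact lt_of_pow_lt_pow_left₀ 2 (by positivity) h2
end

section
/- For all real p ≥ 41, the inequality (2/√3)·√(((1/2)log p + (1/24)log(2048 p^4))·((1/2)log p + (1/6)log(2048 p^4))) < 3·((1/8)log(p^4/2) − (1/3)log 2) holds. -/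
/-- For all real `p ≥ 41`, the inequality
`(2/√3)·√(((1/2)log p + (1/24)log(2048p⁴))·((1/2)log p + (1/6)log(2048p⁴)))
  < 3·((1/8)log(p⁴/2) - (1/3)log 2)` holds. -/
theorem stmt_11 (p : ℝ) (hp : 41 ≤ p) :
    2 / Real.sqrt 3 *
      Real.sqrt ((1 / 2 * Real.log p + 1 / 24 * Real.log (2048 * p ^ 4)) *
        (1 / 2 * Real.log p + 1 / 6 * Real.log (2048 * p ^ 4))) <
      3 * (1 / 8 * Real.log (p ^ 4 / 2) - 1 / 3 * Real.log 2) := by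
  have hp0 : (0:ℝ) < p := by linarith
  have hc : 0 < Real.log 2 := Real.log_pos (by norm_num)
  have hL : 21 * Real.log 2 ≤ 4 * Real.log p := by
    have h := Real.log_le_log (by positivity : (0:ℝ) < 2 ^ 21)
      (by nlinarith [pow_le_pow_left₀ (by norm_num : (0:ℝ) ≤ 41) hp 4] : (2:ℝ) ^ 21 ≤ p ^ 4)
    rwa [Real.log_pow, Real.log_pow] at h
  set L := Real.log p with hLdef
  set c := Real.log 2 with hcdef
  have h1 : Real.log (2048 * p ^ 4) = 11 * c + 4 * L := by
    rw [Real.log_mul (by norm_num) (by positivity), Real.log_pow,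
      show (2048:ℝ) = 2 ^ 11 by norm_num, Real.log_pow]
    push_cast; ring
  have h2 : Real.log (p ^ 4 / 2) = 4 * L - c := by
    rw [Real.log_div (by positivity) (by norm_num), Real.log_pow]
    push_cast; ring
  rw [h1, h2]
  have hR : 0 < 3 * (1 / 8 * (4 * L - c) - 1 / 3 * c) := by nlinarith
  have hA : 0 ≤ 1 / 2 * L + 1 / 24 * (11 * c + 4 * L) := by nlinarith
  have hB : 0 ≤ 1 / 2 * L + 1 / 6 * (11 * c + 4 * L) := by nlinarith
  have h43 : (2:ℝ) / Real.sqrt 3 = Real.sqrt (4 / 3) := by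
    rw [Real.sqrt_div (by norm_num : (0:ℝ) ≤ 4),
      show (4:ℝ) = 2 ^ 2 by norm_num, Real.sqrt_sq (by norm_num : (0:ℝ) ≤ 2)]
  rw [h43, ← Real.sqrt_mul (by norm_num : (0:ℝ) ≤ 4 / 3)]
  rw [Real.sqrt_lt' hR]
  nlinarith [sq_nonneg (4 * L - 21 * c), mul_nonneg (by linarith : (0:ℝ) ≤ 4 * L - 21 * c) hc.le,
    mul_pos hc hc]
end

section
/- For primes p, q > 5, the Weierstrass equation y^2 = x^3 - p^2 x + q^2 is a global minimal model (its discriminant is minimal at every prime). -/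
open WeierstrassCurve

private lemma pv_nonneg_of_den_one {r : ℕ} (x : ℚ) (hx : x.den = 1) :
    0 ≤ padicValRat r x := by
  rw [show x = ((x.num : ℤ) : ℚ) from ((Rat.den_eq_one_iff x).mp hx).symm,
    padicValRat.of_int]
  exact Int.natCast_nonneg _

/-- For primes `p, q > 5`, the Weierstrass equation `y² = x³ - p²x + q²` is a global
minimal model: for every prime `r` and every admissible change of variables producing an
integral model, the `r`-adic valuation of the discriminant does not decrease. -/
theorem stmt_12 (p q : ℕ) (hp : p.Prime) (hq : q.Prime) (hp5 : 5 < p) (hq5 : 5 < q) :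
    ∀ C : VariableChange ℚ,
      (C • (⟨0, 0, 0, -(p : ℚ) ^ 2, (q : ℚ) ^ 2⟩ : WeierstrassCurve ℚ)).a₁.den = 1 →
      (C • (⟨0, 0, 0, -(p : ℚ) ^ 2, (q : ℚ) ^ 2⟩ : WeierstrassCurve ℚ)).a₂.den = 1 →
      (C • (⟨0, 0, 0, -(p : ℚ) ^ 2, (q : ℚ) ^ 2⟩ : WeierstrassCurve ℚ)).a₃.den = 1 →
      (C • (⟨0, 0, 0, -(p : ℚ) ^ 2, (q : ℚ) ^ 2⟩ : WeierstrassCurve ℚ)).a₄.den = 1 →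
      (C • (⟨0, 0, 0, -(p : ℚ) ^ 2, (q : ℚ) ^ 2⟩ : WeierstrassCurve ℚ)).a₆.den = 1 →
      ∀ r : ℕ, r.Prime →
        padicValRat r (⟨0, 0, 0, -(p : ℚ) ^ 2, (q : ℚ) ^ 2⟩ : WeierstrassCurve ℚ).Δ ≤
          padicValRat r
            (C • (⟨0, 0, 0, -(p : ℚ) ^ 2, (q : ℚ) ^ 2⟩ : WeierstrassCurve ℚ)).Δ := by
  intro C h1 h2 h3 h4 h5 r hr
  haveI : Fact r.Prime := ⟨hr⟩
  set W : WeierstrassCurve ℚ := ⟨0, 0, 0, -(p : ℚ) ^ 2, (q : ℚ) ^ 2⟩ with hW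
  have hp0 : (p : ℚ) ≠ 0 := Nat.cast_ne_zero.mpr hp.ne_zero
  have hq0 : (q : ℚ) ≠ 0 := Nat.cast_ne_zero.mpr hq.ne_zero
  -- basic quantities
  have hc4 : W.c₄ = ((48 * p ^ 2 : ℕ) : ℚ) := by
    simp only [hW, c₄, b₂, b₄]
    push_cast
    ring
  have hc6 : W.c₆ = -((864 * q ^ 2 : ℕ) : ℚ) := by
    simp only [hW, c₆, b₂, b₄, b₆]
    push_cast
    ring
  have hc4ne : W.c₄ ≠ 0 := by
    rw [hc4]
    positivity
  have hc6ne : W.c₆ ≠ 0 := by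
    rw [hc6]
    simp only [ne_eq, neg_eq_zero, Nat.cast_eq_zero]
    positivity
  have hΔne : W.Δ ≠ 0 := by
    have hΔval : W.Δ = 64 * (p : ℚ) ^ 6 - 432 * (q : ℚ) ^ 4 := by
      simp only [hW, WeierstrassCurve.Δ, b₂, b₄, b₆, b₈]
      ring
    rw [hΔval, sub_ne_zero]
    intro h
    have hnat : 64 * p ^ 6 = 432 * q ^ 4 := by exact_mod_cast h
    have h3 : (3 : ℕ) ∣ 64 * p ^ 6 := by
      rw [hnat]; exact ⟨144 * q ^ 4, by ring⟩
    have h3p : (3 : ℕ) ∣ p := by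
      rcases (Nat.Prime.dvd_mul (by norm_num)).mp h3 with h | h
      · norm_num at h
      · exact Nat.Prime.dvd_of_dvd_pow (by norm_num) h
    have := (Nat.prime_dvd_prime_iff_eq (by norm_num) hp).mp h3p
    omega
  have hu : (C.u : ℚ) ≠ 0 := C.u.ne_zero
  have huinv : ((C.u⁻¹ : ℚˣ) : ℚ) ≠ 0 := C.u⁻¹.ne_zero
  set v : ℤ := padicValRat r (C.u : ℚ) with hv
  have hvinv : padicValRat r ((C.u⁻¹ : ℚˣ) : ℚ) = -v := by
    rw [Units.val_inv_eq_inv_val, padicValRat.inv]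
  -- integrality of c₄' and c₆'
  obtain ⟨z1, hz1⟩ : ∃ z : ℤ, (z : ℚ) = (C • W).a₁ :=
    ⟨_, (Rat.den_eq_one_iff _).mp h1⟩
  obtain ⟨z2, hz2⟩ : ∃ z : ℤ, (z : ℚ) = (C • W).a₂ :=
    ⟨_, (Rat.den_eq_one_iff _).mp h2⟩
  obtain ⟨z3, hz3⟩ : ∃ z : ℤ, (z : ℚ) = (C • W).a₃ :=
    ⟨_, (Rat.den_eq_one_iff _).mp h3⟩
  obtain ⟨z4, hz4⟩ : ∃ z : ℤ, (z : ℚ) = (C • W).a₄ :=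
    ⟨_, (Rat.den_eq_one_iff _).mp h4⟩
  obtain ⟨z6, hz6⟩ : ∃ z : ℤ, (z : ℚ) = (C • W).a₆ :=
    ⟨_, (Rat.den_eq_one_iff _).mp h5⟩
  have hc4'int : 0 ≤ padicValRat r (C • W).c₄ := by
    have : (C • W).c₄ = (((z1 ^ 2 + 4 * z2) ^ 2 - 24 * (2 * z4 + z1 * z3) : ℤ) : ℚ) := by
      simp only [c₄, b₂, b₄, ← hz1, ← hz2, ← hz3, ← hz4]
      push_cast
      ring
    rw [this, padicValRat.of_int]
    exact Int.natCast_nonneg _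
  have hc6'int : 0 ≤ padicValRat r (C • W).c₆ := by
    have : (C • W).c₆ = ((-(z1 ^ 2 + 4 * z2) ^ 3
        + 36 * (z1 ^ 2 + 4 * z2) * (2 * z4 + z1 * z3) - 216 * (z3 ^ 2 + 4 * z6) : ℤ) : ℚ) := by
      simp only [c₆, b₂, b₄, b₆, ← hz1, ← hz2, ← hz3, ← hz4, ← hz6]
      push_cast
      ring
    rw [this, padicValRat.of_int]
    exact Int.natCast_nonneg _
  -- valuation identities
  have hval4 : padicValRat r (C • W).c₄ = -(4 * v) + padicValRat r W.c₄ := by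
    rw [variableChange_c₄, padicValRat.mul (pow_ne_zero _ huinv) hc4ne,
      padicValRat.pow _, hvinv]
    ring
  have hval6 : padicValRat r (C • W).c₆ = -(6 * v) + padicValRat r W.c₆ := by
    rw [variableChange_c₆, padicValRat.mul (pow_ne_zero _ huinv) hc6ne,
      padicValRat.pow _, hvinv]
    ring
  -- v ≤ 0
  have hvle : v ≤ 0 := by
    rcases eq_or_ne r 2 with rfl | hr2
    · -- use c₆ : val₂(864 q²) = 5
      have hq2 : ¬ (2 : ℕ) ∣ q := by
        intro h
        have := (Nat.prime_dvd_prime_iff_eq (by norm_num) hq).mp h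
        omega
      have hc6val : padicValRat 2 W.c₆ = 5 := by
        rw [hc6, padicValRat.neg, padicValRat.of_nat,
          padicValNat.mul (p := 2) (by norm_num) (by positivity),
          padicValNat.pow (p := 2) _ _,
          padicValNat.eq_zero_of_not_dvd hq2,
          show (864 : ℕ) = 2 ^ 5 * 27 by norm_num,
          padicValNat.mul (p := 2) (by norm_num) (by norm_num),
          padicValNat.prime_pow, padicValNat.eq_zero_of_not_dvd (by norm_num)]
        norm_num
      have := hc6'int
      rw [hval6, hc6val] at this
      omega
    · -- use c₄ : val_r(48 p²) ≤ 3
      have h48 : padicValNat r 48 ≤ 1 := by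
        rw [show (48 : ℕ) = 16 * 3 by norm_num,
          padicValNat.mul (p := r) (by norm_num) (by norm_num),
          padicValNat.eq_zero_of_not_dvd (n := 16)]
        · have : ¬ r ^ 2 ∣ 3 := by
            intro h
            have := Nat.le_of_dvd (by norm_num) h
            nlinarith [hr.two_le]
          have := (padicValNat_dvd_iff_le (p := r) (a := 3) (by norm_num)).not.mp this
          omega
        · intro h
          have : r ∣ 2 ^ 4 := by norm_num at h ⊢; exact h
          have h2 := Nat.Prime.dvd_of_dvd_pow hr this
          have := (Nat.prime_dvd_prime_iff_eq hr (by norm_num)).mp h2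
          exact hr2 this
      have hrp : padicValNat r p ≤ 1 := by
        have : ¬ r ^ 2 ∣ p := by
          intro h
          rcases (Nat.Prime.eq_one_or_self_of_dvd hp _ h) with h' | h'
          · nlinarith [hr.two_le]
          · have : r ∣ p := dvd_trans (dvd_pow_self r (by norm_num)) h
            have := (Nat.prime_dvd_prime_iff_eq hr hp).mp this
            nlinarith [hr.two_le]
        have := (padicValNat_dvd_iff_le (p := r) (a := p) hp.ne_zero).not.mp this
        omega
      have hc4val : padicValRat r W.c₄ ≤ 3 := by
        rw [hc4, padicValRat.of_nat,
          padicValNat.mul (p := r) (by norm_num) (by positivity),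
          padicValNat.pow (p := r) _ _]
        have : padicValNat r 48 + 2 * padicValNat r p ≤ 3 := by omega
        exact_mod_cast this
      have := hc4'int
      rw [hval4] at this
      omega
  -- conclude
  have hΔeq : padicValRat r (C • W).Δ = -(12 * v) + padicValRat r W.Δ := by
    rw [variableChange_Δ, padicValRat.mul (pow_ne_zero _ huinv) hΔne,
      padicValRat.pow _, hvinv]
    ring
  rw [hΔeq]
  omega
end
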